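/- arXiv:math/0307092 — 4 statements merged into one kernel-verified Lean document; each statement's English description precedes it below -/
import Mathlib

section
/- The assignment (w₀,w₁) ↦ w₀∧w₁ on generators descends to a well-defined group homomorphism ν: EP(ℂ) → ℂ∧_ℤℂ; that is, for every (u₀,…,u₄) ∈ liftFT, writing uᵢ = (w₀⁽ⁱ⁾, w₁⁽ⁱ⁾), one has Σᵢ₌₀⁴ (−1)ⁱ w₀⁽ⁱ⁾∧w₁⁽ⁱ⁾ = 0 in ℂ∧_ℤℂ, and the transfer relation is likewise annihilated. -/
/-!
Formalization of a statement from "Extended Bloch group and the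
Cheeger–Chern–Simons class" by W. D. Neumann.
-/

noncomputable section
open scoped Classical
open Complex

namespace ExtendedBloch

/-- The set `Ĉ ⊆ ℂ × ℂ`: pairs `(w₀, w₁)` with `ε₀ e^{w₀} + ε₁ e^{-w₁} = 1`
for some signs `ε₀, ε₁ ∈ {1, -1}`. -/
def CoverSet : Set (ℂ × ℂ) :=
  {w | ∃ e₀ e₁ : ℂ, (e₀ = 1 ∨ e₀ = -1) ∧ (e₁ = 1 ∨ e₁ = -1) ∧
      e₀ * Complex.exp w.1 + e₁ * Complex.exp (-w.2) = 1}

/-- `Ĉ` as a type, with the subspace topology from `ℂ × ℂ`. -/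
abbrev Cover : Type := ↥CoverSet

/-- The point `(z; p, q) := (Log z + pπi, -Log (1-z) + qπi)`. -/
def ellPair (z : ℂ) (p q : ℤ) : ℂ × ℂ :=
  (Complex.log z + (p : ℂ) * (Real.pi : ℂ) * Complex.I,
   -Complex.log (1 - z) + (q : ℂ) * (Real.pi : ℂ) * Complex.I)

lemma neg_one_zpow_cases (n : ℤ) : (-1 : ℂ) ^ n = 1 ∨ (-1 : ℂ) ^ n = -1 := by
  rcases Int.even_or_odd n with h | h
  · exact Or.inl h.neg_one_zpow
  · exact Or.inr h.neg_one_zpow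

lemma exp_log_add_int (z : ℂ) (hz : z ≠ 0) (p : ℤ) :
    Complex.exp (Complex.log z + (p : ℂ) * (Real.pi : ℂ) * Complex.I) = z * (-1) ^ p := by
  rw [Complex.exp_add, Complex.exp_log hz]
  congr 1
  have h : (p : ℂ) * (Real.pi : ℂ) * Complex.I = (p : ℤ) * ((Real.pi : ℂ) * Complex.I) := by
    ring
  rw [h, Complex.exp_int_mul, Complex.exp_pi_mul_I]

/-- `(z; p, q)` lies in `Ĉ` whenever `z ∈ ℂ ∖ {0, 1}`. -/
lemma ellPair_mem {z : ℂ} (h0 : z ≠ 0) (h1 : z ≠ 1) (p q : ℤ) :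
    ellPair z p q ∈ CoverSet := by
  have h1' : (1 : ℂ) - z ≠ 0 := sub_ne_zero.mpr (Ne.symm h1)
  refine ⟨(-1 : ℂ) ^ (-p), (-1 : ℂ) ^ q, neg_one_zpow_cases _, neg_one_zpow_cases _, ?_⟩
  have e1 : Complex.exp ((ellPair z p q).1) = z * (-1) ^ p := exp_log_add_int z h0 p
  have e2 : Complex.exp (-(ellPair z p q).2) = (1 - z) * (-1) ^ (-q) := by
    have h : -(ellPair z p q).2 =
        Complex.log (1 - z) + ((-q : ℤ) : ℂ) * (Real.pi : ℂ) * Complex.I := by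
      simp only [ellPair]; push_cast; ring
    rw [h]; exact exp_log_add_int _ h1' (-q)
  rw [e1, e2]
  have hne : (-1 : ℂ) ≠ 0 := by norm_num
  have hp : (-1 : ℂ) ^ (-p) * (-1 : ℂ) ^ p = 1 := by
    rw [← zpow_add₀ hne]; simp
  have hq : (-1 : ℂ) ^ q * (-1 : ℂ) ^ (-q) = 1 := by
    rw [← zpow_add₀ hne]; simp
  calc (-1 : ℂ) ^ (-p) * (z * (-1) ^ p) + (-1 : ℂ) ^ q * ((1 - z) * (-1) ^ (-q))
      = z * ((-1 : ℂ) ^ (-p) * (-1 : ℂ) ^ p) + (1 - z) * ((-1 : ℂ) ^ q * (-1 : ℂ) ^ (-q)) := by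
        ring
    _ = 1 := by rw [hp, hq]; ring

/-- The set `FT` of five-tuples entering the five term relation. -/
def FTSet : Set (Fin 5 → ℂ) :=
  {v | ∃ x y : ℂ, (x ≠ 0 ∧ x ≠ 1) ∧ (y ≠ 0 ∧ y ≠ 1) ∧ x ≠ y ∧
      v = ![x, y, y / x, (1 - x⁻¹) / (1 - y⁻¹), (1 - x) / (1 - y)]}

/-- `FT⁺`: tuples in `FT` all of whose coordinates lie in the upper half plane. -/
def FTPlus : Set (Fin 5 → ℂ) := {v | v ∈ FTSet ∧ ∀ i, 0 < (v i).im}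

/-- The covering projection `π : Ĉ → ℂ ∖ {0,1}`; on `Ĉ` it equals `ε₀ e^{w₀}`
(note `(e^{2w₀} - e^{-2w₁} + 1)/2 = ε₀ e^{w₀}` on `Ĉ`). -/
def projC (w : ℂ × ℂ) : ℂ :=
  (Complex.exp (2 * w.1) - Complex.exp (-(2 * w.2)) + 1) / 2

def proj5 (u : Fin 5 → Cover) : Fin 5 → ℂ := fun i => projC (u i : ℂ × ℂ)

/-- The base points `((x₀;0,0), …, (x₄;0,0))` with `(x₀,…,x₄) ∈ FT⁺`. -/
def basePts : Set (Fin 5 → Cover) :=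
  {u | ∃ x ∈ FTPlus, ∀ i, (u i : ℂ × ℂ) = ellPair (x i) 0 0}

/-- `liftFT₀`: the component of the preimage of `FT` in `Ĉ⁵` containing the base points
(these all lie in a single component since `FT⁺` is connected). -/
def liftFT₀ : Set (Fin 5 → Cover) :=
  ⋃ u ∈ basePts, connectedComponentIn (proj5 ⁻¹' FTSet) u

/-- The action of `ℤ × ℤ` on `ℂ × ℂ` by `(w₀, w₁) ↦ (w₀ + pπi, w₁ + qπi)`. -/
def shiftPair (w : ℂ × ℂ) (t : ℤ × ℤ) : ℂ × ℂ :=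
  (w.1 + (t.1 : ℂ) * (Real.pi : ℂ) * Complex.I,
   w.2 + (t.2 : ℂ) * (Real.pi : ℂ) * Complex.I)

/-- The set `V ⊆ (ℤ × ℤ)⁵`. -/
def VSet : Set (Fin 5 → ℤ × ℤ) :=
  {v | ∃ p₀ p₁ q₀ q₁ q₂ : ℤ,
      v = ![(p₀, q₀), (p₁, q₁), (p₁ - p₀, q₂), (p₁ - p₀ + q₁ - q₀, q₂ - q₁),
            (q₁ - q₀, q₂ - q₁ - p₀)]}

/-- `liftFT = liftFT₀ + V`. -/
def liftFT : Set (Fin 5 → Cover) :=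
  {w | ∃ u ∈ liftFT₀, ∃ v ∈ VSet, ∀ i, (w i : ℂ × ℂ) = shiftPair (u i : ℂ × ℂ) (v i)}

/-- Relators of the lifted five term relation. -/
def fiveTermRelSet : Set (FreeAbelianGroup Cover) :=
  {a | ∃ u : Fin 5 → Cover, u ∈ liftFT ∧
      a = ∑ i : Fin 5, ((-1 : ℤ) ^ (i : ℕ)) • FreeAbelianGroup.of (u i)}

/-- Relators of the transfer relation. -/
def transferRelSet : Set (FreeAbelianGroup Cover) :=
  {a | ∃ (z : ℂ) (h0 : z ≠ 0) (h1 : z ≠ 1) (p q p' q' : ℤ),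
      a = FreeAbelianGroup.of (⟨ellPair z p q, ellPair_mem h0 h1 p q⟩ : Cover)
        + FreeAbelianGroup.of (⟨ellPair z p' q', ellPair_mem h0 h1 p' q'⟩ : Cover)
        - FreeAbelianGroup.of (⟨ellPair z p q', ellPair_mem h0 h1 p q'⟩ : Cover)
        - FreeAbelianGroup.of (⟨ellPair z p' q, ellPair_mem h0 h1 p' q⟩ : Cover)}

def epRel : AddSubgroup (FreeAbelianGroup Cover) :=
  AddSubgroup.closure (fiveTermRelSet ∪ transferRelSet)

/-- The extended pre-Bloch group `EP(ℂ)`: the free abelian group on `Ĉ` modulo the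
lifted five term relations and the transfer relations. -/
abbrev EP : Type := FreeAbelianGroup Cover ⧸ epRel

/-- The class of a point of `Ĉ` in `EP(ℂ)`. -/
def epMk (w : Cover) : EP := QuotientAddGroup.mk (FreeAbelianGroup.of w)

/-- The class `[z; p, q] ∈ EP(ℂ)` (junk value `0` if `z ∈ {0, 1}`). -/
def epGen (z : ℂ) (p q : ℤ) : EP :=
  if h : z ≠ 0 ∧ z ≠ 1 then epMk ⟨ellPair z p q, ellPair_mem h.1 h.2 p q⟩ else 0

/-- `χ : ℂ* → EP(ℂ)`, `χ(z) = [z;0,1] - [z;0,0]` (and `χ(1) = 0`). -/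
def chi (z : ℂ) : EP := epGen z 0 1 - epGen z 0 0

/-- The wedge `a ∧ b` in `ℂ ∧_ℤ ℂ`, the second exterior power of `ℂ` as a `ℤ`-module. -/
def wedgeC (a b : ℂ) : ⋀[ℤ]^2 ℂ :=
  ⟨ExteriorAlgebra.ιMulti ℤ 2 ![a, b],
   ExteriorAlgebra.ιMulti_range ℤ 2 (Set.mem_range_self _)⟩


end ExtendedBloch

/-!
On `Ĉ` only squares are controlled: `exp (2 w₀) = x²` and `exp (-2 w₁) = (1 - x)²` with
`x = π w`, the signs `ε` being unknown. Hence the multiplicative identities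
`x₂x₀ = x₁`, `x₄(1 - x₁) = 1 - x₀`, `x₄x₂ = x₃`, `x₀(1 - x₃) = 1 - x₄`, `(1 - x₃)(1 - x₁) = 1 - x₂`
on `FT` make five linear combinations of the coordinates take values in the discrete set `πiℤ`
on the preimage of `FT`, so they are constant on its connected components. At a base point they
read `log b - log c - log (b / c)` with `b, c` in the same open half-plane, hence vanish. So they
vanish on `liftFT₀`, and the shifts in `V` preserve them. Given these five linear relations,
`Σ (-1)ⁱ w₀⁽ⁱ⁾ ∧ w₁⁽ⁱ⁾` expands to zero in any exterior square; the transfer relation is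
bilinearity together with `πi ∧ πi = 0`.
-/

open scoped Real

section Alternating

variable {R M N : Type*} [CommRing R] [AddCommGroup M] [Module R M] [AddCommGroup N] [Module R N]
  {B : M →ₗ[R] M →ₗ[R] N}

theorem LinearMap.IsAlt.five_term (hB : B.IsAlt) (a₀ a₁ b₀ b₁ b₂ : M) :
    B a₀ b₀ - B a₁ b₁ + B (a₁ - a₀) b₂ - B (a₁ - a₀ + (b₁ - b₀)) (b₂ - b₁)
      + B (b₁ - b₀) (b₂ - b₁ - a₀) = 0 := by
  simp only [map_add, map_sub, LinearMap.add_apply, LinearMap.sub_apply, hB.self_eq_zero,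
    ← hB.neg b₀ a₀, ← hB.neg b₁ a₀]
  abel

theorem LinearMap.IsAlt.transfer (hB : B.IsAlt) (a b c : M) (p q p' q' : ℤ) :
    B (a + p • c) (b + q • c) + B (a + p' • c) (b + q' • c)
      = B (a + p • c) (b + q' • c) + B (a + p' • c) (b + q • c) := by
  simp only [map_add, map_zsmul, LinearMap.add_apply, LinearMap.smul_apply, hB.self_eq_zero,
    smul_zero]
  abel

end Alternating

theorem IsPreconnected.apply_eq_of_exp_two_mul_eq_one {X : Type*} [TopologicalSpace X]
    {S : Set X} (hS : IsPreconnected S) {g : X → ℂ} (hg : ContinuousOn g S)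
    (h : ∀ x ∈ S, exp (2 * g x) = 1) {x y : X} (hx : x ∈ S) (hy : y ∈ S) : g x = g y := by
  refine hS.constant_of_mapsTo (T := AddSubgroup.zmultiples ((π : ℂ) * I))
    (isDiscrete_iff_discreteTopology.mpr (NormedSpace.discreteTopology_zmultiples _)) hg
    (fun z hz => ?_) hx hy
  obtain ⟨n, hn⟩ := exp_eq_one_iff.mp (h z hz)
  exact AddSubgroup.mem_zmultiples_iff.mpr ⟨n, by rw [zsmul_eq_mul]; linear_combination -hn / 2⟩

namespace Complex

theorem log_div_of_arg_sub_mem {b c : ℂ} (hb : b ≠ 0) (hc : c ≠ 0)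
    (h₁ : -π < arg b - arg c) (h₂ : arg b - arg c ≤ π) : log (b / c) = log b - log c := by
  have him : (log b - log c).im = arg b - arg c := by simp [log_im]
  rw [← log_exp (x := log b - log c) (him ▸ h₁) (him ▸ h₂), exp_sub, exp_log hb, exp_log hc]

theorem log_div_of_im_pos {b c : ℂ} (hb : 0 < b.im) (hc : 0 < c.im) :
    log (b / c) = log b - log c := by
  have := arg_lt_pi_iff.mpr (Or.inr hb.ne'); have := arg_lt_pi_iff.mpr (Or.inr hc.ne')
  have := arg_nonneg_iff.mpr hb.le; have := arg_nonneg_iff.mpr hc.le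
  exact log_div_of_arg_sub_mem (fun h => by simp [h] at hb) (fun h => by simp [h] at hc)
    (by linarith) (by linarith)

theorem log_div_of_im_neg {b c : ℂ} (hb : b.im < 0) (hc : c.im < 0) :
    log (b / c) = log b - log c := by
  have := neg_pi_lt_arg b; have := neg_pi_lt_arg c
  have := arg_neg_iff.mpr hb; have := arg_neg_iff.mpr hc
  exact log_div_of_arg_sub_mem (fun h => by simp [h] at hb) (fun h => by simp [h] at hc)
    (by linarith) (by linarith)

theorem exp_two_mul (z : ℂ) : exp (2 * z) = exp z ^ 2 := by
  rw [sq, ← exp_add, two_mul]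

theorem exp_two_mul_sub_sub_eq_one {a b c A B C : ℂ} (ha : exp (2 * a) = A ^ 2)
    (hb : exp (2 * b) = B ^ 2) (hc : exp (2 * c) = C ^ 2) (hA : A ≠ 0) (hC : C ≠ 0)
    (h : A * C = B) : exp (2 * (b - c - a)) = 1 := by
  rw [mul_sub, mul_sub, exp_sub, exp_sub, ha, hb, hc, ← h]
  field_simp

end Complex

namespace ExtendedBloch

lemma projC_eq_of_sign {w : ℂ × ℂ} {e₀ e₁ : ℂ} (he₀ : e₀ ^ 2 = 1) (he₁ : e₁ ^ 2 = 1)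
    (h : e₀ * exp w.1 + e₁ * exp (-w.2) = 1) : projC w = e₀ * exp w.1 := by
  have h₂ : exp (-(2 * w.2)) = (1 - e₀ * exp w.1) ^ 2 := by
    rw [← eq_sub_of_add_eq' h, mul_pow, he₁, one_mul, ← exp_two_mul, mul_neg]
  rw [projC, h₂, exp_two_mul]
  linear_combination (-exp w.1 ^ 2 / 2) * he₀

lemma exp_two_mul_of_mem_coverSet {w : ℂ × ℂ} (hw : w ∈ CoverSet) :
    exp (2 * w.1) = projC w ^ 2 ∧ exp (2 * -w.2) = (1 - projC w) ^ 2 := by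
  obtain ⟨e₀, e₁, he₀, he₁, h⟩ := hw
  have he₀ := sq_eq_one_iff.mpr he₀
  have he₁ := sq_eq_one_iff.mpr he₁
  rw [projC_eq_of_sign he₀ he₁ h, ← eq_sub_of_add_eq' h, mul_pow, mul_pow, he₀, he₁, one_mul,
    one_mul, exp_two_mul, exp_two_mul]
  exact ⟨rfl, rfl⟩

lemma ellPair_zero_zero (z : ℂ) : ellPair z 0 0 = (log z, -log (1 - z)) := by
  simp [ellPair]

lemma projC_ellPair_zero_zero {z : ℂ} (h₀ : z ≠ 0) (h₁ : z ≠ 1) : projC (ellPair z 0 0) = z := by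
  have h : 1 * exp (ellPair z 0 0).1 + 1 * exp (-(ellPair z 0 0).2) = 1 := by
    rw [ellPair_zero_zero, neg_neg, exp_log h₀, exp_log (sub_ne_zero.mpr h₁.symm)]
    ring
  rw [projC_eq_of_sign (one_pow 2) (one_pow 2) h, ellPair_zero_zero, one_mul, exp_log h₀]

lemma ne_zero_and_ne_one_of_mem_FTSet {x : Fin 5 → ℂ} (hx : x ∈ FTSet) (i : Fin 5) :
    x i ≠ 0 ∧ x i ≠ 1 := by
  obtain ⟨X, Y, ⟨hX₀, hX₁⟩, ⟨hY₀, hY₁⟩, hXY, rfl⟩ := hx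
  have hY₁' : 1 - Y ≠ 0 := sub_ne_zero.mpr hY₁.symm
  fin_cases i <;> simp [*, hX₁.symm, hXY.symm, div_eq_iff, sub_eq_zero]

lemma mul_identities_of_mem_FTSet {x : Fin 5 → ℂ} (hx : x ∈ FTSet) :
    x 2 * x 0 = x 1 ∧ x 4 * (1 - x 1) = 1 - x 0 ∧ x 4 * x 2 = x 3 ∧
      x 0 * (1 - x 3) = 1 - x 4 ∧ (1 - x 3) * (1 - x 1) = 1 - x 2 := by
  obtain ⟨X, Y, ⟨hX₀, hX₁⟩, ⟨hY₀, hY₁⟩, -, rfl⟩ := hx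
  have hX₁' : 1 - X ≠ 0 := sub_ne_zero.mpr hX₁.symm
  have hY₁' : 1 - Y ≠ 0 := sub_ne_zero.mpr hY₁.symm
  simp only [Matrix.cons_val]
  refine ⟨?_, ?_, ?_, ?_, ?_⟩ <;> field_simp <;> ring

/-- In the coordinates `ℓ i = (w i).1` and `m i = -(w i).2`, which on `liftFT₀` are branches of
`log xᵢ` and `log (1 - xᵢ)`, each entry is `log b - log c - log a` for one of the identities
`a * c = b` of `mul_identities_of_mem_FTSet`. -/
def fiveTermDefect (w : Fin 5 → ℂ × ℂ) : Fin 5 → ℂ :=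
  let ℓ i := (w i).1
  let m i := -(w i).2
  ![ℓ 1 - ℓ 0 - ℓ 2, m 0 - m 1 - ℓ 4, ℓ 3 - ℓ 2 - ℓ 4, m 4 - m 3 - ℓ 0, m 2 - m 1 - m 3]

@[fun_prop]
lemma continuous_fiveTermDefect : Continuous fiveTermDefect := by
  refine continuous_pi fun k => ?_
  fin_cases k <;> simp only [fiveTermDefect] <;> fun_prop

lemma exp_two_mul_fiveTermDefect {v : Fin 5 → Cover} (hv : v ∈ proj5 ⁻¹' FTSet) (k : Fin 5) :
    exp (2 * fiveTermDefect (fun i => (v i : ℂ × ℂ)) k) = 1 := by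
  have hℓ i := (exp_two_mul_of_mem_coverSet (v i).2).1
  have hm i := (exp_two_mul_of_mem_coverSet (v i).2).2
  have hx₀ i := (ne_zero_and_ne_one_of_mem_FTSet hv i).1
  have hx₁ i := sub_ne_zero.mpr (ne_zero_and_ne_one_of_mem_FTSet hv i).2.symm
  obtain ⟨h₀, h₁, h₂, h₃, h₄⟩ := mul_identities_of_mem_FTSet hv
  fin_cases k
  · exact exp_two_mul_sub_sub_eq_one (hℓ 2) (hℓ 1) (hℓ 0) (hx₀ 2) (hx₀ 0) h₀
  · exact exp_two_mul_sub_sub_eq_one (hℓ 4) (hm 0) (hm 1) (hx₀ 4) (hx₁ 1) h₁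
  · exact exp_two_mul_sub_sub_eq_one (hℓ 4) (hℓ 3) (hℓ 2) (hx₀ 4) (hx₀ 2) h₂
  · exact exp_two_mul_sub_sub_eq_one (hℓ 0) (hm 4) (hm 3) (hx₀ 0) (hx₁ 3) h₃
  · exact exp_two_mul_sub_sub_eq_one (hm 3) (hm 2) (hm 1) (hx₁ 3) (hx₁ 1) h₄

lemma fiveTermDefect_ellPair {x : Fin 5 → ℂ} (hx : x ∈ FTPlus) :
    fiveTermDefect (fun i => ellPair (x i) 0 0) = 0 := by
  obtain ⟨hFT, him⟩ := hx
  have him' i : (1 - x i).im < 0 := by simpa using him i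
  have hx₀ i := (ne_zero_and_ne_one_of_mem_FTSet hFT i).1
  have hx₁ i := sub_ne_zero.mpr (ne_zero_and_ne_one_of_mem_FTSet hFT i).2.symm
  obtain ⟨h₀, h₁, h₂, h₃, h₄⟩ := mul_identities_of_mem_FTSet hFT
  funext k
  fin_cases k <;>
    simp only [fiveTermDefect, ellPair_zero_zero, neg_neg, Fin.zero_eta, Fin.mk_one,
      Fin.reduceFinMk, Matrix.cons_val, Pi.zero_apply]
  · rw [eq_div_of_mul_eq (hx₀ 0) h₀, log_div_of_im_pos (him 1) (him 0)]; ring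
  · rw [eq_div_of_mul_eq (hx₁ 1) h₁, log_div_of_im_neg (him' 0) (him' 1)]; ring
  · rw [eq_div_of_mul_eq (hx₀ 2) h₂, log_div_of_im_pos (him 3) (him 2)]; ring
  · rw [eq_div_of_mul_eq (hx₁ 3) h₃, log_div_of_im_neg (him' 4) (him' 3)]; ring
  · rw [eq_div_of_mul_eq (hx₁ 1) h₄, log_div_of_im_neg (him' 2) (him' 1)]; ring

lemma fiveTermDefect_eq_zero_of_mem_liftFT₀ {u : Fin 5 → Cover} (hu : u ∈ liftFT₀) :
    fiveTermDefect (fun i => (u i : ℂ × ℂ)) = 0 := by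
  obtain ⟨b, ⟨x, hx, hb⟩, hub⟩ :
      ∃ b ∈ basePts, u ∈ connectedComponentIn (proj5 ⁻¹' FTSet) b := by
    simpa [liftFT₀] using hu
  have hbx : proj5 b = x := funext fun i => by
    have hne := ne_zero_and_ne_one_of_mem_FTSet hx.1 i
    rw [proj5, hb i, projC_ellPair_zero_zero hne.1 hne.2]
  have hbF : b ∈ proj5 ⁻¹' FTSet := by rw [Set.mem_preimage, hbx]; exact hx.1
  funext k
  rw [← congrFun (fiveTermDefect_ellPair hx) k, ← funext hb]
  refine isPreconnected_connectedComponentIn.apply_eq_of_exp_two_mul_eq_one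
    (g := fun v : Fin 5 → Cover => fiveTermDefect (fun i => (v i : ℂ × ℂ)) k) ?_
    (fun v hv => exp_two_mul_fiveTermDefect (connectedComponentIn_subset _ _ hv) k)
    hub (mem_connectedComponentIn hbF)
  fun_prop

lemma fiveTermDefect_shiftPair (w : Fin 5 → ℂ × ℂ) {v : Fin 5 → ℤ × ℤ} (hv : v ∈ VSet) :
    fiveTermDefect (fun i => shiftPair (w i) (v i)) = fiveTermDefect w := by
  obtain ⟨p₀, p₁, q₀, q₁, q₂, rfl⟩ := hv
  funext k
  fin_cases k <;>
    simp only [fiveTermDefect, shiftPair, Fin.zero_eta, Fin.mk_one, Fin.reduceFinMk,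
      Matrix.cons_val, Int.cast_sub, Int.cast_add] <;>
    ring

lemma coe_wedgeC (a b : ℂ) :
    (wedgeC a b : ExteriorAlgebra ℤ ℂ) = ExteriorAlgebra.ι ℤ a * ExteriorAlgebra.ι ℤ b := by
  simp [wedgeC, ExteriorAlgebra.ιMulti_apply]

def wedge : ℂ →ₗ[ℤ] ℂ →ₗ[ℤ] ⋀[ℤ]^2 ℂ :=
  LinearMap.mk₂ ℤ wedgeC
    (fun a a' b => Subtype.ext <| by simp only [Submodule.coe_add, coe_wedgeC, map_add, add_mul])
    (fun n a b => Subtype.ext <| by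
      simp only [Submodule.coe_smul, coe_wedgeC, map_zsmul, smul_mul_assoc])
    (fun a b b' => Subtype.ext <| by simp only [Submodule.coe_add, coe_wedgeC, map_add, mul_add])
    (fun n a b => Subtype.ext <| by
      simp only [Submodule.coe_smul, coe_wedgeC, map_zsmul, mul_smul_comm])

lemma wedge_apply (a b : ℂ) : wedge a b = wedgeC a b := rfl

lemma isAlt_wedge : wedge.IsAlt := fun a =>
  Subtype.ext <| by simp [wedge_apply, coe_wedgeC]

lemma sum_wedgeC_eq_zero_of_fiveTermDefect_eq_zero {w : Fin 5 → ℂ × ℂ}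
    (hw : fiveTermDefect w = 0) :
    ∑ i : Fin 5, ((-1 : ℤ) ^ (i : ℕ)) • wedgeC (w i).1 (w i).2 = 0 := by
  have d₀ : (w 1).1 - (w 0).1 - (w 2).1 = 0 := congrFun hw 0
  have d₁ : -(w 0).2 - -(w 1).2 - (w 4).1 = 0 := congrFun hw 1
  have d₂ : (w 3).1 - (w 2).1 - (w 4).1 = 0 := congrFun hw 2
  have d₃ : -(w 4).2 - -(w 3).2 - (w 0).1 = 0 := congrFun hw 3
  have d₄ : -(w 2).2 - -(w 1).2 - -(w 3).2 = 0 := congrFun hw 4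
  have key := isAlt_wedge.five_term (w 0).1 (w 1).1 (w 0).2 (w 1).2 (w 2).2
  rw [show (w 1).1 - (w 0).1 = (w 2).1 by linear_combination d₀,
    show (w 1).2 - (w 0).2 = (w 4).1 by linear_combination d₁,
    show (w 2).1 + (w 4).1 = (w 3).1 by linear_combination -d₂,
    show (w 2).2 - (w 1).2 = (w 3).2 by linear_combination -d₄,
    show (w 3).2 - (w 0).1 = (w 4).2 by linear_combination d₃] at key
  rw [Fin.sum_univ_five, ← key]
  simp [wedge_apply, sub_eq_add_neg]

lemma sum_wedgeC_eq_zero_of_mem_liftFT {u : Fin 5 → Cover} (hu : u ∈ liftFT) :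
    ∑ i : Fin 5, ((-1 : ℤ) ^ (i : ℕ)) • wedgeC (u i : ℂ × ℂ).1 (u i : ℂ × ℂ).2 = 0 := by
  obtain ⟨u₀, hu₀, v, hv, hshift⟩ := hu
  apply sum_wedgeC_eq_zero_of_fiveTermDefect_eq_zero
  rw [funext hshift, fiveTermDefect_shiftPair _ hv]
  exact fiveTermDefect_eq_zero_of_mem_liftFT₀ hu₀

lemma wedgeC_ellPair_transfer (z : ℂ) (p q p' q' : ℤ) :
    wedgeC (ellPair z p q).1 (ellPair z p q).2 + wedgeC (ellPair z p' q').1 (ellPair z p' q').2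
      = wedgeC (ellPair z p q').1 (ellPair z p q').2
        + wedgeC (ellPair z p' q).1 (ellPair z p' q).2 := by
  simpa only [ellPair, wedge_apply, zsmul_eq_mul, mul_assoc] using
    isAlt_wedge.transfer (log z) (-log (1 - z)) (π * I) p q p' q'

lemma epRel_le_ker_lift_wedgeC :
    epRel ≤ (FreeAbelianGroup.lift fun w : Cover => wedgeC (w : ℂ × ℂ).1 (w : ℂ × ℂ).2).ker := by
  rw [epRel, AddSubgroup.closure_le]
  rintro _ (⟨u, hu, rfl⟩ | ⟨z, h₀, h₁, p, q, p', q', rfl⟩)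
  · simpa [map_sum] using sum_wedgeC_eq_zero_of_mem_liftFT hu
  · simp [wedgeC_ellPair_transfer z p q p' q']

/-- The assignment `(w₀, w₁) ↦ w₀ ∧ w₁` on generators annihilates the
lifted five term relation and the transfer relation, and hence descends to a well-defined
homomorphism `ν : EP(ℂ) → ℂ ∧_ℤ ℂ`. -/
theorem nu_well_defined :
    (∀ u : Fin 5 → Cover, u ∈ liftFT →
      ∑ i : Fin 5, ((-1 : ℤ) ^ (i : ℕ)) • wedgeC (u i : ℂ × ℂ).1 (u i : ℂ × ℂ).2 = 0) ∧
    (∀ (z : ℂ), z ≠ 0 → z ≠ 1 → ∀ p q p' q' : ℤ,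
      wedgeC (ellPair z p q).1 (ellPair z p q).2
          + wedgeC (ellPair z p' q').1 (ellPair z p' q').2
        = wedgeC (ellPair z p q').1 (ellPair z p q').2
          + wedgeC (ellPair z p' q).1 (ellPair z p' q).2) ∧
    ∃ ν : EP →+ ⋀[ℤ]^2 ℂ,
      ∀ w : Cover, ν (epMk w) = wedgeC (w : ℂ × ℂ).1 (w : ℂ × ℂ).2 :=
  ⟨fun _ => sum_wedgeC_eq_zero_of_mem_liftFT,
    fun z _ _ => wedgeC_ellPair_transfer z,
    ⟨QuotientAddGroup.lift epRel _ epRel_le_ker_lift_wedgeC,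
      fun _ => FreeAbelianGroup.lift_apply_of _ _⟩⟩

end ExtendedBloch
end
end

section
/- Let x, y ∈ ℂ∖{0,1} with x ≠ y. Then all five numbers x, y, y/x, (1−x⁻¹)/(1−y⁻¹), (1−x)/(1−y) have strictly positive imaginary part if and only if Im y > 0 and x lies in the interior of the convex hull of {0, 1, y} in ℂ. Consequently, the set FT⁺ is connected. -/
/-!
Formalization of a statement from "Extended Bloch group and the
Cheeger–Chern–Simons class" by W. D. Neumann.

Since `Im (z / w)` has the sign of `Im (z * conj w)`, the conditions on `x`, `y / x` and
`(1 - x) / (1 - y)` say that `x` lies strictly to the left of the edges `0 → 1`, `y → 0` and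
`1 → y`, i.e. inside the triangle `{0, 1, y}` once `Im y > 0`. The condition on
`(1 - x⁻¹) / (1 - y⁻¹) = (x - 1) y / (x (y - 1))` is then automatic: writing `X = Im x`,
`B = Im (y x̄)`, `C = Im ((1 - x)(1 - ȳ))` for the barycentric coordinates of `x` scaled by `Im y`,
`Im y · Im ((x - 1) y · conj (x (y - 1))) = B C + X C |y|² + X B |1 - y|²`.
So `FT⁺` is a continuous image of the pairs `(a + b y, y)` with `a, b > 0`, `a + b < 1`,
`Im y > 0`, themselves a continuous image of a convex set.
-/

noncomputable section
open scoped Classical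
open Complex

namespace ExtendedBloch

open ComplexConjugate

theorem ne_zero_of_im_ne_zero {z : ℂ} (h : z.im ≠ 0) : z ≠ 0 :=
  ne_of_apply_ne im h

theorem im_div_pos_iff {z w : ℂ} (hw : w ≠ 0) : 0 < (z / w).im ↔ 0 < (z * conj w).im := by
  rw [div_im, ← sub_div, div_pos_iff_of_pos_right (normSq_pos.2 hw), mul_im, conj_re, conj_im]
  ring_nf

theorem convex_setOf_im_sub_mul_nonneg (a c : ℂ) : Convex ℝ {z : ℂ | 0 ≤ ((z - a) * c).im} := by
  intro u hu v hv s t hs ht hst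
  have h : (s • u + t • v - a) * c = s • ((u - a) * c) + t • ((v - a) * c) := by
    simp only [Complex.real_smul]
    linear_combination (a * c) * (by exact_mod_cast hst : (s : ℂ) + t = 1)
  simp only [Set.mem_ofPred_eq, h, add_im, smul_im] at hu hv ⊢
  exact add_nonneg (mul_nonneg hs hu) (mul_nonneg ht hv)

theorem interior_setOf_im_sub_mul_nonneg (a : ℂ) {c : ℂ} (hc : c ≠ 0) :
    interior {z : ℂ | 0 ≤ ((z - a) * c).im} = {z | 0 < ((z - a) * c).im} := by
  have h := ((Homeomorph.subRight a).trans (Homeomorph.mulRight₀ c hc)).preimage_interior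
    {w : ℂ | 0 ≤ w.im}
  rw [interior_setOfPred_le_im] at h
  exact h.symm

theorem ofReal_add_ofReal_mul_mem_convexHull {a b : ℝ} (ha : 0 ≤ a) (hb : 0 ≤ b)
    (hab : a + b ≤ 1) (y : ℂ) : (a : ℂ) + b * y ∈ convexHull ℝ ({0, 1, y} : Set ℂ) := by
  have h := (convex_convexHull ℝ ({0, 1, y} : Set ℂ)).sum_mem (t := Finset.univ)
    (w := ![1 - a - b, a, b]) (z := ![0, 1, y])
    (by intro i _; fin_cases i <;> simp <;> linarith)
    (by simp [Fin.sum_univ_three]; ring)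
    (by intro i _; apply subset_convexHull; fin_cases i <;> simp)
  simpa [Fin.sum_univ_three, Complex.real_smul] using h

theorem cross_pos_iff_exists_barycentric {x y : ℂ} (hy : 0 < y.im) :
    (0 < x.im ∧ 0 < (y * conj x).im ∧ 0 < ((1 - x) * conj (1 - y)).im) ↔
      ∃ a b : ℝ, 0 < a ∧ 0 < b ∧ a + b < 1 ∧ x = a + b * y := by
  constructor
  · rintro ⟨hX, hB, hC⟩
    have hsum : (y * conj x).im + x.im + ((1 - x) * conj (1 - y)).im = y.im := by
      simp only [mul_im, sub_re, sub_im, conj_re, conj_im, one_re, one_im]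
      ring
    refine ⟨(y * conj x).im / y.im, x.im / y.im, by positivity, by positivity, ?_, ?_⟩
    · rw [← add_div, div_lt_one hy]
      linarith
    · apply Complex.ext
      · simp only [add_re, mul_re, mul_im, ofReal_re, ofReal_im, conj_re, conj_im]
        field_simp
        ring
      · simp only [add_im, mul_im, ofReal_re, ofReal_im, zero_mul, zero_add, add_zero]
        field_simp
  · rintro ⟨a, b, ha, hb, hab, rfl⟩
    simp only [mul_im, mul_re, add_re, add_im, sub_re, sub_im, conj_re, conj_im, one_re, one_im,
      ofReal_re, ofReal_im]
    refine ⟨by nlinarith, by nlinarith, by nlinarith⟩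

theorem mem_interior_convexHull_zero_one_iff {x y : ℂ} (hy : 0 < y.im) :
    x ∈ interior (convexHull ℝ ({0, 1, y} : Set ℂ)) ↔
      0 < x.im ∧ 0 < (y * conj x).im ∧ 0 < ((1 - x) * conj (1 - y)).im := by
  constructor
  · intro hx
    have hsub : convexHull ℝ ({0, 1, y} : Set ℂ) ⊆ {z | 0 ≤ ((z - 0) * 1).im} ∩
        {z | 0 ≤ ((z - 0) * -conj y).im} ∩ {z | 0 ≤ ((z - 1) * conj (y - 1)).im} := by
      refine convexHull_min ?_ (((convex_setOf_im_sub_mul_nonneg _ _).inter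
        (convex_setOf_im_sub_mul_nonneg _ _)).inter (convex_setOf_im_sub_mul_nonneg _ _))
      rintro z (rfl | rfl | rfl) <;> simp [mul_im, hy.le, mul_comm]
    have hy0 : y ≠ 0 := ne_zero_of_im_ne_zero hy.ne'
    have hy1 : y - 1 ≠ 0 := ne_zero_of_im_ne_zero (by simpa using hy.ne')
    have h := interior_mono hsub hx
    rw [interior_inter, interior_inter, interior_setOf_im_sub_mul_nonneg _ one_ne_zero,
      interior_setOf_im_sub_mul_nonneg _ (neg_ne_zero.2 ((map_ne_zero conj).2 hy0)),
      interior_setOf_im_sub_mul_nonneg _ ((map_ne_zero conj).2 hy1)] at h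
    obtain ⟨⟨h1, h2⟩, h3⟩ := h
    simp only [Set.mem_ofPred_eq, mul_im, sub_re, sub_im, neg_re, neg_im, conj_re, conj_im,
      one_re, one_im, sub_zero] at h1 h2 h3 ⊢
    refine ⟨by linarith, by linarith, by linarith⟩
  · intro hx
    refine interior_maximal (t := {z : ℂ | 0 < z.im ∧ 0 < (y * conj z).im ∧
      0 < ((1 - z) * conj (1 - y)).im}) (fun z hz => ?_) ?_ hx
    · obtain ⟨a, b, ha, hb, hab, rfl⟩ := (cross_pos_iff_exists_barycentric hy).1 hz
      exact ofReal_add_ofReal_mul_mem_convexHull ha.le hb.le hab.le y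
    · exact (isOpen_lt (g := fun z : ℂ => z.im) continuous_const (by fun_prop)).inter
        ((isOpen_lt (g := fun z : ℂ => (y * conj z).im) continuous_const (by fun_prop)).inter
          (isOpen_lt (g := fun z : ℂ => ((1 - z) * conj (1 - y)).im) continuous_const
            (by fun_prop)))

theorem im_one_sub_inv_div_one_sub_inv_pos {x y : ℂ} (hx : 0 < x.im) (hy : 0 < y.im)
    (hB : 0 < (y * conj x).im) (hC : 0 < ((1 - x) * conj (1 - y)).im) :
    0 < ((1 - x⁻¹) / (1 - y⁻¹)).im := by
  have hx0 : x ≠ 0 := ne_zero_of_im_ne_zero hx.ne'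
  have hy0 : y ≠ 0 := ne_zero_of_im_ne_zero hy.ne'
  have hy1 : y - 1 ≠ 0 := ne_zero_of_im_ne_zero (by simpa using hy.ne')
  have hq : (1 - x⁻¹) / (1 - y⁻¹) = (x - 1) * y / (x * (y - 1)) := by
    field_simp
  have key : y.im * ((x - 1) * y * conj (x * (y - 1))).im =
      (y * conj x).im * ((1 - x) * conj (1 - y)).im
        + x.im * ((1 - x) * conj (1 - y)).im * normSq y
        + x.im * (y * conj x).im * normSq (1 - y) := by
    simp only [mul_im, mul_re, sub_re, sub_im, conj_re, conj_im, one_re, one_im, normSq_apply]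
    ring
  rw [hq, im_div_pos_iff (mul_ne_zero hx0 hy1)]
  refine pos_of_mul_pos_right (key ▸ ?_) hy.le
  exact add_pos_of_pos_of_nonneg
    (add_pos_of_pos_of_nonneg (mul_pos hB hC) (mul_nonneg (mul_pos hx hC).le (normSq_nonneg _)))
    (mul_nonneg (mul_pos hx hB).le (normSq_nonneg _))

theorem five_im_pos_iff (x y : ℂ) :
    (0 < x.im ∧ 0 < y.im ∧ 0 < (y / x).im ∧ 0 < ((1 - x⁻¹) / (1 - y⁻¹)).im ∧
        0 < ((1 - x) / (1 - y)).im) ↔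
      (0 < y.im ∧ x ∈ interior (convexHull ℝ ({0, 1, y} : Set ℂ))) := by
  constructor
  · rintro ⟨hx, hy, hyx, -, hxy⟩
    refine ⟨hy, (mem_interior_convexHull_zero_one_iff hy).2 ⟨hx, ?_, ?_⟩⟩
    · exact (im_div_pos_iff (ne_zero_of_im_ne_zero hx.ne')).1 hyx
    · exact (im_div_pos_iff (ne_zero_of_im_ne_zero (by simpa using hy.ne'))).1 hxy
  · rintro ⟨hy, hx⟩
    obtain ⟨hx, hB, hC⟩ := (mem_interior_convexHull_zero_one_iff hy).1 hx
    refine ⟨hx, hy, ?_, im_one_sub_inv_div_one_sub_inv_pos hx hy hB hC, ?_⟩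
    · exact (im_div_pos_iff (ne_zero_of_im_ne_zero hx.ne')).2 hB
    · exact (im_div_pos_iff (ne_zero_of_im_ne_zero (by simpa using hy.ne'))).2 hC

def ftMap (p : ℂ × ℂ) : Fin 5 → ℂ :=
  ![p.1, p.2, p.2 / p.1, (1 - p.1⁻¹) / (1 - p.2⁻¹), (1 - p.1) / (1 - p.2)]

def trianglePairs : Set (ℂ × ℂ) :=
  {p | 0 < p.2.im ∧ p.1 ∈ interior (convexHull ℝ ({0, 1, p.2} : Set ℂ))}

theorem ftPlus_eq_image : FTPlus = ftMap '' trianglePairs := by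
  ext v
  constructor
  · rintro ⟨⟨x, y, -, -, -, rfl⟩, hv⟩
    refine ⟨(x, y), (five_im_pos_iff x y).1 ?_, rfl⟩
    simpa [Fin.forall_fin_succ] using hv
  · rintro ⟨⟨x, y⟩, hxy, rfl⟩
    obtain ⟨hx, hy, hyx, hq, h1⟩ := (five_im_pos_iff x y).2 hxy
    refine ⟨⟨x, y, ⟨ne_zero_of_im_ne_zero hx.ne', ne_of_apply_ne im (by simp [hx.ne'])⟩,
      ⟨ne_zero_of_im_ne_zero hy.ne', ne_of_apply_ne im (by simp [hy.ne'])⟩, ?_, rfl⟩, ?_⟩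
    · rintro rfl
      simp [div_self (ne_zero_of_im_ne_zero hx.ne')] at hyx
    · simp [Fin.forall_fin_succ, ftMap, *]

theorem isConnected_trianglePairs : IsConnected trianglePairs := by
  have himage : trianglePairs = (fun w : (ℝ × ℝ) × ℂ => ((w.1.1 : ℂ) + w.1.2 * w.2, w.2)) ''
      ({a : ℝ × ℝ | 0 < a.1 ∧ 0 < a.2 ∧ a.1 + a.2 < 1} ×ˢ {y : ℂ | 0 < y.im}) := by
    ext ⟨x, y⟩
    constructor
    · rintro ⟨hy : 0 < y.im, hx : x ∈ interior (convexHull ℝ {0, 1, y})⟩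
      obtain ⟨a, b, ha, hb, hab, rfl⟩ :=
        (cross_pos_iff_exists_barycentric hy).1 ((mem_interior_convexHull_zero_one_iff hy).1 hx)
      exact ⟨((a, b), y), ⟨⟨ha, hb, hab⟩, hy⟩, rfl⟩
    · rintro ⟨⟨⟨a, b⟩, y⟩, ⟨⟨ha, hb, hab⟩, hy⟩, h⟩
      obtain ⟨rfl, rfl⟩ := Prod.ext_iff.1 h
      exact ⟨hy, (mem_interior_convexHull_zero_one_iff hy).2
        ((cross_pos_iff_exists_barycentric hy).2 ⟨a, b, ha, hb, hab, rfl⟩)⟩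
  have hsimplex : Convex ℝ {a : ℝ × ℝ | 0 < a.1 ∧ 0 < a.2 ∧ a.1 + a.2 < 1} :=
    (convex_halfSpace_gt (LinearMap.fst ℝ ℝ ℝ).isLinear 0).inter
      ((convex_halfSpace_gt (LinearMap.snd ℝ ℝ ℝ).isLinear 0).inter
        (convex_halfSpace_lt (LinearMap.fst ℝ ℝ ℝ + LinearMap.snd ℝ ℝ ℝ).isLinear 1))
  rw [himage]
  refine ((hsimplex.prod (convex_halfSpace_im_gt 0)).isConnected ?_).image _
    (by fun_prop : Continuous _).continuousOn
  exact ⟨((1 / 3, 1 / 3), I), by norm_num, by simp⟩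

theorem continuousOn_ftMap : ContinuousOn ftMap {p : ℂ × ℂ | p.1 ≠ 0 ∧ p.2 ≠ 0 ∧ p.2 ≠ 1} := by
  refine continuousOn_pi.2 fun i => ?_
  fin_cases i <;> simp only [ftMap]
  · exact continuousOn_fst
  · exact continuousOn_snd
  · exact continuousOn_snd.div continuousOn_fst fun p hp => hp.1
  · exact (continuousOn_const.sub (continuousOn_fst.inv₀ fun p hp => hp.1)).div
      (continuousOn_const.sub (continuousOn_snd.inv₀ fun p hp => hp.2.1))
      fun p hp => sub_ne_zero.2 (by simpa [eq_comm] using hp.2.2)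
  · exact (continuousOn_const.sub continuousOn_fst).div (continuousOn_const.sub continuousOn_snd)
      fun p hp => sub_ne_zero.2 (Ne.symm hp.2.2)

/-- The five numbers `x, y, y/x, (1-x⁻¹)/(1-y⁻¹), (1-x)/(1-y)` all lie
in the upper half plane iff `Im y > 0` and `x` is interior to the convex hull of
`{0, 1, y}`; consequently `FT⁺` is connected. -/
theorem ftPlus_characterization_and_connected :
    (∀ x y : ℂ, x ≠ 0 → x ≠ 1 → y ≠ 0 → y ≠ 1 → x ≠ y →
      ((0 < x.im ∧ 0 < y.im ∧ 0 < (y / x).im ∧ 0 < ((1 - x⁻¹) / (1 - y⁻¹)).im ∧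
          0 < ((1 - x) / (1 - y)).im)
        ↔ (0 < y.im ∧ x ∈ interior (convexHull ℝ ({0, 1, y} : Set ℂ))))) ∧
    IsConnected FTPlus := by
  refine ⟨fun x y _ _ _ _ _ => five_im_pos_iff x y, ?_⟩
  have hdom : trianglePairs ⊆ {p : ℂ × ℂ | p.1 ≠ 0 ∧ p.2 ≠ 0 ∧ p.2 ≠ 1} := by
    rintro ⟨x, y⟩ ⟨hy : 0 < y.im, hx⟩
    exact ⟨ne_zero_of_im_ne_zero ((mem_interior_convexHull_zero_one_iff hy).1 hx).1.ne',
      ne_zero_of_im_ne_zero hy.ne', ne_of_apply_ne im (by simp [hy.ne'])⟩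
  rw [ftPlus_eq_image]
  exact isConnected_trianglePairs.image ftMap (continuousOn_ftMap.mono hdom)

end ExtendedBloch
end
end

section
/- The map ℓ: (ℂ∖{0,1})×ℤ×ℤ → Ĉ defined by ℓ(z,p,q) := (Log z + pπi, −Log(1−z) + qπi) is a bijection. -/
/-!
Formalization of a statement from "Extended Bloch group and the
Cheeger–Chern–Simons class" by W. D. Neumann.
-/

noncomputable section
open scoped Classical
open Complex

namespace ExtendedBloch

lemma exists_int_of_exp_pm_one {x : ℂ}
    (h : Complex.exp x = 1 ∨ Complex.exp x = -1) :
    ∃ n : ℤ, x = (n : ℂ) * (Real.pi : ℂ) * Complex.I := by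
  rcases h with h | h
  · obtain ⟨n, hn⟩ := Complex.exp_eq_one_iff.mp h
    exact ⟨2 * n, by rw [hn]; push_cast; ring⟩
  · have h' : Complex.exp (x - (Real.pi : ℂ) * Complex.I) = 1 := by
      rw [Complex.exp_sub, Complex.exp_pi_mul_I, h]
      norm_num
    obtain ⟨n, hn⟩ := Complex.exp_eq_one_iff.mp h'
    refine ⟨2 * n + 1, ?_⟩
    have : x = n * (2 * ↑Real.pi * Complex.I) + (Real.pi : ℂ) * Complex.I := by
      linear_combination hn
    rw [this]; push_cast; ring

lemma ellPair_inj {z z' : ℂ} (h0 : z ≠ 0) (h1 : z ≠ 1) (h0' : z' ≠ 0) (h1' : z' ≠ 1)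
    {p q p' q' : ℤ} (h : ellPair z p q = ellPair z' p' q') :
    z = z' ∧ p = p' ∧ q = q' := by
  have hz1 : (1 : ℂ) - z ≠ 0 := sub_ne_zero.mpr (Ne.symm h1)
  have hz1' : (1 : ℂ) - z' ≠ 0 := sub_ne_zero.mpr (Ne.symm h1')
  have h1eq : (ellPair z p q).1 = (ellPair z' p' q').1 := by rw [h]
  have h2eq : (ellPair z p q).2 = (ellPair z' p' q').2 := by rw [h]
  have e1 : z * (-1) ^ p = z' * (-1) ^ p' := by
    rw [← exp_log_add_int z h0 p, ← exp_log_add_int z' h0' p']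
    exact congrArg Complex.exp h1eq
  have e2 : (1 - z) * (-1) ^ (-q) = (1 - z') * (-1) ^ (-q') := by
    rw [← exp_log_add_int _ hz1 (-q), ← exp_log_add_int _ hz1' (-q')]
    congr 1
    have : -(ellPair z p q).2 = -(ellPair z' p' q').2 := by rw [h2eq]
    simp only [ellPair] at this ⊢
    push_cast at this ⊢
    linear_combination this
  have hne : (-1 : ℂ) ≠ 0 := by norm_num
  -- z' = z * (-1)^(p - p')
  have hz : z' = z * (-1 : ℂ) ^ (p - p') := by
    have : z * (-1 : ℂ) ^ p * (-1 : ℂ) ^ (-p') = z' * (-1:ℂ) ^ p' * (-1:ℂ) ^ (-p') := by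
      rw [e1]
    rw [mul_assoc, mul_assoc, ← zpow_add₀ hne, ← zpow_add₀ hne] at this
    simp only [add_neg_cancel, zpow_zero, mul_one] at this
    rw [sub_eq_add_neg]; exact this.symm
  have hz2 : (1 : ℂ) - z' = (1 - z) * (-1 : ℂ) ^ (q' - q) := by
    have : (1-z) * (-1 : ℂ) ^ (-q) * (-1 : ℂ) ^ q' = (1-z') * (-1:ℂ) ^ (-q') * (-1:ℂ) ^ q' := by
      rw [e2]
    rw [mul_assoc, mul_assoc, ← zpow_add₀ hne, ← zpow_add₀ hne] at this
    simp only [neg_add_cancel, zpow_zero, mul_one] at this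
    rw [show q' - q = -q + q' by ring]; exact this.symm
  have hzz : z = z' := by
    rcases neg_one_zpow_cases (p - p') with ha | ha
    · rw [hz, ha, mul_one]
    · exfalso
      rw [hz, ha, mul_neg_one] at hz2
      rcases neg_one_zpow_cases (q' - q) with hb | hb
      · rw [hb, mul_one] at hz2
        apply h0
        linear_combination hz2 / 2
      · rw [hb, mul_neg_one] at hz2
        have : (2 : ℂ) = 0 := by linear_combination hz2
        norm_num at this
  subst hzz
  have hpi : (Real.pi : ℂ) * Complex.I ≠ 0 := by
    simp [Real.pi_ne_zero, Complex.I_ne_zero]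
  have hp : p = p' := by
    simp only [ellPair, Prod.mk.injEq] at h
    have := h.1
    have h2 : (p : ℂ) * (Real.pi * Complex.I) = (p' : ℂ) * (Real.pi * Complex.I) := by
      push_cast; linear_combination this
    have := mul_right_cancel₀ hpi h2
    exact_mod_cast this
  have hq : q = q' := by
    simp only [ellPair, Prod.mk.injEq] at h
    have := h.2
    have h2 : (q : ℂ) * (Real.pi * Complex.I) = (q' : ℂ) * (Real.pi * Complex.I) := by
      push_cast; linear_combination this
    have := mul_right_cancel₀ hpi h2
    exact_mod_cast this
  exact ⟨rfl, hp, hq⟩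

/-- `ℓ : (ℂ ∖ {0,1}) × ℤ × ℤ → Ĉ`,
`(z, p, q) ↦ (Log z + pπi, -Log(1-z) + qπi)` is a bijection. -/
theorem ellPair_bijective :
    Function.Bijective
      (fun zpq : {z : ℂ // z ≠ 0 ∧ z ≠ 1} × ℤ × ℤ =>
        (⟨ellPair zpq.1.1 zpq.2.1 zpq.2.2,
          ellPair_mem zpq.1.2.1 zpq.1.2.2 zpq.2.1 zpq.2.2⟩ : Cover)) := by
  constructor
  · rintro ⟨⟨z, h0, h1⟩, p, q⟩ ⟨⟨z', h0', h1'⟩, p', q'⟩ heq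
    have heq' : ellPair z p q = ellPair z' p' q' := congrArg Subtype.val heq
    obtain ⟨hz, hp, hq⟩ := ellPair_inj h0 h1 h0' h1' heq'
    subst hz; subst hp; subst hq; rfl
  · rintro ⟨⟨w₀, w₁⟩, e₀, e₁, he₀, he₁, hsum⟩
    set z : ℂ := e₀ * Complex.exp w₀ with hzdef
    have he₀ne : e₀ ≠ 0 := by rcases he₀ with h | h <;> simp [h]
    have he₁ne : e₁ ≠ 0 := by rcases he₁ with h | h <;> simp [h]
    have hz0 : z ≠ 0 := mul_ne_zero he₀ne (Complex.exp_ne_zero _)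
    have h1z : (1 : ℂ) - z = e₁ * Complex.exp (-w₁) := by
      linear_combination -hsum
    have h1zne : (1 : ℂ) - z ≠ 0 := by
      rw [h1z]; exact mul_ne_zero he₁ne (Complex.exp_ne_zero _)
    have hz1 : z ≠ 1 := fun h => h1zne (by rw [h]; ring)
    have he₀sq : e₀ * e₀ = 1 := by rcases he₀ with h | h <;> simp [h]
    have he₁sq : e₁ * e₁ = 1 := by rcases he₁ with h | h <;> simp [h]
    -- find p
    have hexp0 : Complex.exp (w₀ - Complex.log z) = e₀ := by
      rw [Complex.exp_sub, Complex.exp_log hz0, div_eq_iff hz0, hzdef]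
      linear_combination (-(Complex.exp w₀)) * he₀sq
    obtain ⟨p, hp⟩ := exists_int_of_exp_pm_one (x := w₀ - Complex.log z)
      (by rw [hexp0]; exact he₀)
    have hexp1 : Complex.exp (-w₁ - Complex.log (1 - z)) = e₁ := by
      rw [Complex.exp_sub, Complex.exp_log h1zne, div_eq_iff h1zne, h1z]
      linear_combination (-(Complex.exp (-w₁))) * he₁sq
    obtain ⟨q', hq'⟩ := exists_int_of_exp_pm_one (x := -w₁ - Complex.log (1 - z))
      (by rw [hexp1]; exact he₁)
    refine ⟨⟨⟨z, hz0, hz1⟩, p, -q'⟩, ?_⟩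
    apply Subtype.ext
    simp only [ellPair]
    rw [Prod.mk.injEq]
    constructor
    · linear_combination -hp
    · push_cast
      linear_combination hq'

end ExtendedBloch
end
end

section
/- Let pᵢ, qᵢ ∈ ℤ for i = 0,…,4. Then Σᵢ₌₀⁴ (−1)ⁱ (Log xᵢ + pᵢπi)∧(−Log(1−xᵢ) + qᵢπi) = 0 in ℂ∧_ℤℂ for every (x₀,…,x₄) ∈ FT⁺ if and only if p₂ = p₁−p₀, p₃ = p₁−p₀+q₁−q₀, q₃ = q₂−q₁, p₄ = q₁−q₀, and q₄ = q₂−q₁−p₀. (That is, the lifted five-term relation is the most general lift of the five-term relation on which the wedge expression vanishes identically.) -/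
/-!
Formalization of a statement from "Extended Bloch group and the
Cheeger–Chern–Simons class" by W. D. Neumann.
-/

noncomputable section
open scoped Classical
open Complex

namespace ExtendedBloch

/-- The wedge `(Log z + pπi) ∧ (-Log(1-z) + qπi) ∈ ℂ ∧_ℤ ℂ`. -/
def wTerm (z : ℂ) (p q : ℤ) : ⋀[ℤ]^2 ℂ :=
  wedgeC (Complex.log z + (p : ℂ) * (Real.pi : ℂ) * Complex.I)
    (-Complex.log (1 - z) + (q : ℂ) * (Real.pi : ℂ) * Complex.I)

open scoped Real

/-!
On `FT⁺` every coordinate lies in the upper half plane and every `1 - xᵢ` in the lower one, so all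
arguments involved lie in `(0, π)` or `(-π, 0)`, and the principal logarithms of the `xᵢ` and
`1 - xᵢ` are `ℤ`-combinations of `Log x, Log y, Log (1 - x), Log (1 - y), Log (1 - y / x)` without
`2πi` corrections. Expanding the wedges, the `Log ∧ Log` part cancels by the classical five term
relation and the sum becomes `u ∧ πi` with `u = Σ cₖ Log zₖ`, where the `cₖ` are five integer linear
forms in the `pᵢ, qᵢ` whose vanishing is equivalent to the stated relations. Conversely, the
`ℤ`-linear functional `a ∧ b ↦ Re a Im b - Im a Re b` sends `u ∧ πi` to `π Σ cₖ log |zₖ|`; at three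
points of `FT⁺` where every `|zₖ|²` has the form `2^a 5^b`, unique factorisation forces all `cₖ = 0`.
-/

section Wedge

lemma wedgeC_add_left (a a' b : ℂ) : wedgeC (a + a') b = wedgeC a b + wedgeC a' b :=
  Subtype.ext <| by simp [coe_wedgeC, add_mul]

lemma wedgeC_add_right (a b b' : ℂ) : wedgeC a (b + b') = wedgeC a b + wedgeC a b' :=
  Subtype.ext <| by simp [coe_wedgeC, mul_add]

lemma wedgeC_zsmul_left (n : ℤ) (a b : ℂ) : wedgeC (n • a) b = n • wedgeC a b :=
  Subtype.ext <| by rw [Submodule.coe_smul, coe_wedgeC, coe_wedgeC, map_zsmul, smul_mul_assoc]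

lemma wedgeC_zsmul_right (n : ℤ) (a b : ℂ) : wedgeC a (n • b) = n • wedgeC a b :=
  Subtype.ext <| by rw [Submodule.coe_smul, coe_wedgeC, coe_wedgeC, map_zsmul, mul_smul_comm]

lemma wedgeC_neg_left (a b : ℂ) : wedgeC (-a) b = -wedgeC a b := by
  simpa using wedgeC_zsmul_left (-1) a b

lemma wedgeC_neg_right (a b : ℂ) : wedgeC a (-b) = -wedgeC a b := by
  simpa using wedgeC_zsmul_right (-1) a b

lemma wedgeC_sub_left (a a' b : ℂ) : wedgeC (a - a') b = wedgeC a b - wedgeC a' b := by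
  rw [sub_eq_add_neg, wedgeC_add_left, wedgeC_neg_left, sub_eq_add_neg]

lemma wedgeC_sub_right (a b b' : ℂ) : wedgeC a (b - b') = wedgeC a b - wedgeC a b' := by
  rw [sub_eq_add_neg, wedgeC_add_right, wedgeC_neg_right, sub_eq_add_neg]

lemma wedgeC_self (a : ℂ) : wedgeC a a = 0 :=
  Subtype.ext <| by simp [coe_wedgeC]

lemma wedgeC_comm (a b : ℂ) : wedgeC b a = -wedgeC a b := by
  have h := wedgeC_self (a + b)
  rw [wedgeC_add_left, wedgeC_add_right, wedgeC_add_right, wedgeC_self, wedgeC_self] at h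
  exact eq_neg_of_add_eq_zero_right (by simpa using h)

/-- The classical five term relation in `ℂ ∧ ℂ`, with `A, B, C, D, E` standing for
`Log x, Log y, Log (1 - x), Log (1 - y), Log (1 - y / x)`. -/
lemma wedgeC_five_term (A B C D E : ℂ) :
    wedgeC A C - wedgeC B D + wedgeC (B - A) E - wedgeC (B - A + (C - D)) (E - D)
      + wedgeC (C - D) (A + (E - D)) = 0 := by
  simp only [wedgeC_sub_left, wedgeC_sub_right, wedgeC_add_left, wedgeC_add_right, wedgeC_self]
  rw [wedgeC_comm A C, wedgeC_comm A D]
  abel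

def piWedge : ℂ →ₗ[ℤ] ⋀[ℤ]^2 ℂ where
  toFun u := wedgeC u (π * I)
  map_add' u v := wedgeC_add_left u v _
  map_smul' n u := wedgeC_zsmul_left n u _

lemma piWedge_apply (u : ℂ) : piWedge u = wedgeC u (π * I) := rfl

lemma wTerm_eq (z : ℂ) (p q : ℤ) :
    wTerm z p q = piWedge (q • log z + p • log (1 - z)) - wedgeC (log z) (log (1 - z)) := by
  have hpi (n : ℤ) : (n : ℂ) * π * I = n • (π * I) := by rw [zsmul_eq_mul, mul_assoc]
  rw [wTerm, hpi, hpi, map_add, map_zsmul, map_zsmul, piWedge_apply, piWedge_apply,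
    wedgeC_add_left, wedgeC_add_right, wedgeC_add_right, wedgeC_neg_right, wedgeC_neg_right,
    wedgeC_zsmul_left, wedgeC_zsmul_left, wedgeC_zsmul_right, wedgeC_zsmul_right, wedgeC_self,
    wedgeC_comm (log (1 - z)) (π * I)]
  module

def reImDet : ⋀[ℤ]^2 ℂ →ₗ[ℤ] ℝ :=
  exteriorPower.alternatingMapLinearEquiv
    { basisOneI.det.toMultilinearMap.restrictScalars ℤ with
      map_eq_zero_of_eq' := fun v _ _ h hij => basisOneI.det.map_eq_zero_of_eq v h hij }

lemma reImDet_wedgeC (a b : ℂ) : reImDet (wedgeC a b) = a.re * b.im - a.im * b.re := by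
  rw [show wedgeC a b = exteriorPower.ιMulti ℤ 2 ![a, b] from rfl, reImDet,
    exteriorPower.alternatingMapLinearEquiv_apply_ιMulti]
  change basisOneI.det ![a, b] = _
  simp [Module.Basis.det_apply, Matrix.det_fin_two, Module.Basis.toMatrix_apply, mul_comm]

lemma re_eq_zero_of_piWedge_eq_zero {u : ℂ} (h : piWedge u = 0) : u.re = 0 := by
  have := congrArg reImDet h
  rw [piWedge_apply, reImDet_wedgeC, map_zero] at this
  simpa [Real.pi_ne_zero] using this

end Wedge

section Log

variable {a b z w : ℂ}

lemma log_eq_of_exp_eq (h : exp w = z) (him : |w.im - arg z| < 2 * π) : log z = w := by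
  have hz : z ≠ 0 := h ▸ exp_ne_zero w
  obtain ⟨n, hn⟩ := exp_eq_exp_iff_exists_int.1 (h.trans (exp_log hz).symm)
  have hn_im : w.im - arg z = n * (2 * π) := by
    rw [hn]; simp [log_im]
  rw [hn_im, abs_mul, abs_of_pos Real.two_pi_pos] at him
  have hn0 : n = 0 :=
    Int.abs_lt_one_iff.1 (by exact_mod_cast (mul_lt_iff_lt_one_left Real.two_pi_pos).1 him)
  simp [hn, hn0]

lemma ne_zero_of_im_pos (h : 0 < z.im) : z ≠ 0 := fun h0 => by simp [h0] at h

lemma ne_zero_of_im_neg (h : z.im < 0) : z ≠ 0 := fun h0 => by simp [h0] at h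

lemma arg_pos_of_im_pos (h : 0 < z.im) : 0 < arg z :=
  (arg_nonneg_iff.2 h.le).lt_of_ne fun h0 => h.ne' (arg_eq_zero_iff.1 h0.symm).2

lemma arg_lt_pi_of_im_pos (h : 0 < z.im) : arg z < π :=
  arg_lt_pi_iff.2 (Or.inr h.ne')

lemma log_div_of_abs_arg_sub_lt_pi (ha : a ≠ 0) (hb : b ≠ 0) (h : |arg a - arg b| < π) :
    log (a / b) = log a - log b := by
  refine log_eq_of_exp_eq (by rw [exp_sub, exp_log ha, exp_log hb]) ?_
  rw [sub_im, log_im, log_im]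
  have := neg_pi_lt_arg (a / b)
  have := arg_le_pi (a / b)
  rw [abs_lt] at h ⊢
  constructor <;> linarith

lemma log_div_of_im_pos (ha : 0 < a.im) (hb : 0 < b.im) : log (a / b) = log a - log b := by
  refine log_div_of_abs_arg_sub_lt_pi (ne_zero_of_im_pos ha) (ne_zero_of_im_pos hb) ?_
  have := arg_pos_of_im_pos ha
  have := arg_pos_of_im_pos hb
  have := arg_lt_pi_of_im_pos ha
  have := arg_lt_pi_of_im_pos hb
  rw [abs_lt]; constructor <;> linarith

lemma log_div_of_im_neg (ha : a.im < 0) (hb : b.im < 0) : log (a / b) = log a - log b := by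
  refine log_div_of_abs_arg_sub_lt_pi (ne_zero_of_im_neg ha) (ne_zero_of_im_neg hb) ?_
  have := arg_neg_iff.2 ha
  have := arg_neg_iff.2 hb
  have := neg_pi_lt_arg a
  have := neg_pi_lt_arg b
  rw [abs_lt]; constructor <;> linarith

lemma log_mul_of_im_pos (ha : 0 < a.im) (hb : 0 < b.im) (hab : 0 < (a * b).im) :
    log (a * b) = log a + log b := by
  refine log_eq_of_exp_eq (by rw [exp_add, exp_log (ne_zero_of_im_pos ha),
    exp_log (ne_zero_of_im_pos hb)]) ?_
  rw [add_im, log_im, log_im]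
  have := arg_pos_of_im_pos ha
  have := arg_pos_of_im_pos hb
  have := arg_pos_of_im_pos hab
  have := arg_lt_pi_of_im_pos ha
  have := arg_lt_pi_of_im_pos hb
  have := arg_lt_pi_of_im_pos hab
  rw [abs_lt]; constructor <;> linarith

lemma log_mul_of_im_pos_of_im_neg (ha : 0 < a.im) (hb : b.im < 0) :
    log (a * b) = log a + log b := by
  refine log_mul (ne_zero_of_im_pos ha) (ne_zero_of_im_neg hb) ⟨?_, ?_⟩
  · linarith [arg_pos_of_im_pos ha, neg_pi_lt_arg b]
  · linarith [arg_lt_pi_of_im_pos ha, arg_neg_iff.2 hb]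

end Log

section FiveTerm

variable {x y : ℂ}

lemma ft_three_eq_mul (hx : x ≠ 0) (hy : y ≠ 0) (hy1 : y ≠ 1) :
    (1 - x⁻¹) / (1 - y⁻¹) = y / x * ((1 - x) / (1 - y)) := by
  have : 1 - y ≠ 0 := sub_ne_zero.2 hy1.symm
  field_simp
  ring

lemma one_sub_ft_three_eq_div (hx : x ≠ 0) (hy : y ≠ 0) (hy1 : y ≠ 1) :
    1 - (1 - x⁻¹) / (1 - y⁻¹) = (1 - y / x) / (1 - y) := by
  have : 1 - y ≠ 0 := sub_ne_zero.2 hy1.symm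
  field_simp
  ring

lemma one_sub_ft_four_eq_mul (hx : x ≠ 0) (hy : y ≠ 0) (hy1 : y ≠ 1) :
    1 - (1 - x) / (1 - y) = x * (1 - (1 - x⁻¹) / (1 - y⁻¹)) := by
  have : 1 - y ≠ 0 := sub_ne_zero.2 hy1.symm
  field_simp
  ring

lemma wTerm_alternating_sum_eq (hx : 0 < x.im) (hy : 0 < y.im) (h₂ : 0 < (y / x).im)
    (h₃ : 0 < ((1 - x⁻¹) / (1 - y⁻¹)).im) (h₄ : 0 < ((1 - x) / (1 - y)).im)
    (p₀ p₁ p₂ p₃ p₄ q₀ q₁ q₂ q₃ q₄ : ℤ) :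
    wTerm x p₀ q₀ - wTerm y p₁ q₁ + wTerm (y / x) p₂ q₂
        - wTerm ((1 - x⁻¹) / (1 - y⁻¹)) p₃ q₃ + wTerm ((1 - x) / (1 - y)) p₄ q₄
      = piWedge ((q₀ - q₂ + q₃ + p₄) • log x + (q₂ - q₁ - q₃) • log y
          + (p₀ - q₃ + q₄) • log (1 - x) + (q₃ - q₄ - p₁ + p₃ - p₄) • log (1 - y)
          + (p₂ - p₃ + p₄) • log (1 - y / x)) := by
  have hx0 := ne_zero_of_im_pos hx
  have hy0 := ne_zero_of_im_pos hy
  have hy1 : y ≠ 1 := fun h => by simp [h] at hy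
  have him_one_sub {z : ℂ} (hz : 0 < z.im) : (1 - z).im < 0 := by simpa using hz
  have l₂ : log (y / x) = log y - log x := log_div_of_im_pos hy hx
  have l₄ : log ((1 - x) / (1 - y)) = log (1 - x) - log (1 - y) :=
    log_div_of_im_neg (him_one_sub hx) (him_one_sub hy)
  have l₃ : log ((1 - x⁻¹) / (1 - y⁻¹)) = log (y / x) + log ((1 - x) / (1 - y)) := by
    rw [ft_three_eq_mul hx0 hy0 hy1] at h₃ ⊢
    exact log_mul_of_im_pos h₂ h₄ h₃
  have l₃' : log (1 - (1 - x⁻¹) / (1 - y⁻¹)) = log (1 - y / x) - log (1 - y) := by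
    rw [one_sub_ft_three_eq_div hx0 hy0 hy1]
    exact log_div_of_im_neg (him_one_sub h₂) (him_one_sub hy)
  have l₄' : log (1 - (1 - x) / (1 - y)) = log x + log (1 - (1 - x⁻¹) / (1 - y⁻¹)) := by
    rw [one_sub_ft_four_eq_mul hx0 hy0 hy1]
    exact log_mul_of_im_pos_of_im_neg hx (him_one_sub h₃)
  have hW := wedgeC_five_term (log x) (log y) (log (1 - x)) (log (1 - y)) (log (1 - y / x))
  simp only [wTerm_eq]
  rw [l₄', l₃', l₃, l₄, l₂]
  simp only [map_add, map_sub, map_zsmul]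
  linear_combination (norm := module) -hW

lemma mem_FTPlus (hx : 0 < x.im) (hy : 0 < y.im) (h₂ : 0 < (y / x).im)
    (h₃ : 0 < ((1 - x⁻¹) / (1 - y⁻¹)).im) (h₄ : 0 < ((1 - x) / (1 - y)).im) :
    ![x, y, y / x, (1 - x⁻¹) / (1 - y⁻¹), (1 - x) / (1 - y)] ∈ FTPlus := by
  have hne_one {z : ℂ} (hz : 0 < z.im) : z ≠ 1 := fun h => by simp [h] at hz
  refine ⟨⟨x, y, ⟨ne_zero_of_im_pos hx, hne_one hx⟩, ⟨ne_zero_of_im_pos hy, hne_one hy⟩,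
    fun hxy => hne_one h₂ ?_, rfl⟩, ?_⟩
  · rw [hxy, div_self (ne_zero_of_im_pos hy)]
  · simp [Fin.forall_fin_succ, *]

end FiveTerm

section PrimeLog

lemma padicValRat_prod {ι : Type*} (p : ℕ) [Fact p.Prime] (s : Finset ι) {f : ι → ℚ}
    (hf : ∀ i ∈ s, f i ≠ 0) :
    padicValRat p (∏ i ∈ s, f i) = ∑ i ∈ s, padicValRat p (f i) := by
  classical
  induction s using Finset.induction_on with
  | empty => simp
  | insert i s hi ih =>
    have hs : ∀ j ∈ s, f j ≠ 0 := fun j hj => hf j (Finset.mem_insert_of_mem hj)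
    rw [Finset.prod_insert hi, Finset.sum_insert hi,
      padicValRat.mul (hf i (Finset.mem_insert_self i s)) (Finset.prod_ne_zero_iff.2 hs), ih hs]

lemma padicValRat_natCast_of_prime {p q : ℕ} [Fact p.Prime] (hq : q.Prime) :
    padicValRat p q = if p = q then 1 else 0 := by
  rw [padicValRat.of_nat]
  split_ifs with h
  · simp [h, padicValNat.self hq.one_lt]
  · have := Fact.mk hq
    simp [padicValNat_primes h]

theorem eq_zero_of_sum_mul_log_prime_eq_zero {ι : Type*} [Fintype ι] {p : ι → ℕ}
    (hp : ∀ i, (p i).Prime) (hinj : Function.Injective p) {n : ι → ℤ}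
    (h : ∑ i, n i * Real.log (p i) = 0) (i : ι) : n i = 0 := by
  have := Fact.mk (hp i)
  have hpos (j : ι) : (0 : ℝ) < (p j : ℝ) ^ n j := zpow_pos (by exact_mod_cast (hp j).pos) _
  have hℝ : ∏ j, (p j : ℝ) ^ n j = 1 := by
    refine Real.eq_one_of_pos_of_log_eq_zero (Finset.prod_pos fun j _ => hpos j) ?_
    rw [Real.log_prod fun j _ => (hpos j).ne']
    simpa [Real.log_zpow] using h
  have hℚ : ∏ j, (p j : ℚ) ^ n j = 1 := by
    exact_mod_cast (show ((∏ j, (p j : ℚ) ^ n j : ℚ) : ℝ) = 1 by push_cast; exact hℝ)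
  have := congrArg (padicValRat (p i)) hℚ
  rw [padicValRat_prod _ _ fun j _ => zpow_ne_zero _ (by exact_mod_cast (hp j).ne_zero)] at this
  simpa [padicValRat.zpow, padicValRat_natCast_of_prime (hp _), hinj.eq_iff] using this

lemma eq_zero_of_mul_log_two_add_mul_log_five_eq_zero {a b : ℤ}
    (h : a * Real.log 2 + b * Real.log 5 = 0) : a = 0 ∧ b = 0 := by
  have key := eq_zero_of_sum_mul_log_prime_eq_zero (p := ![2, 5]) (n := ![a, b])
    (by simp [Fin.forall_fin_two, Nat.prime_two, Nat.prime_five]) (by decide)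
    (by simpa [Fin.sum_univ_two] using h)
  exact ⟨key 0, key 1⟩

end PrimeLog

lemma eq_zero_of_forall_piWedge_eq_zero {c₀ c₁ c₂ c₃ c₄ : ℤ}
    (hc : ∀ x y : ℂ, 0 < x.im → 0 < y.im → 0 < (y / x).im →
      0 < ((1 - x⁻¹) / (1 - y⁻¹)).im → 0 < ((1 - x) / (1 - y)).im →
      piWedge (c₀ • log x + c₁ • log y + c₂ • log (1 - x) + c₃ • log (1 - y)
        + c₄ • log (1 - y / x)) = 0) :
    c₀ = 0 ∧ c₁ = 0 ∧ c₂ = 0 ∧ c₃ = 0 ∧ c₄ = 0 := by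
  have e₁ := re_eq_zero_of_piWedge_eq_zero <|
    hc (1 / 2 + 1 / 2 * I) (2 * I) (by norm_num) (by norm_num)
      (by norm_num [div_im, normSq_apply]) (by norm_num [div_im, div_re, normSq_apply])
      (by norm_num [div_im, div_re, normSq_apply])
  have e₂ := re_eq_zero_of_piWedge_eq_zero <|
    hc (1 / 2 + 1 / 2 * I) (1 + 2 * I) (by norm_num) (by norm_num)
      (by norm_num [div_im, normSq_apply]) (by norm_num [div_im, div_re, normSq_apply])
      (by norm_num [div_im, div_re, normSq_apply])
  have e₃ := re_eq_zero_of_piWedge_eq_zero <|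
    hc (3 / 4 + 1 / 4 * I) (1 + I) (by norm_num) (by norm_num)
      (by norm_num [div_im, normSq_apply]) (by norm_num [div_im, div_re, normSq_apply])
      (by norm_num [div_im, div_re, normSq_apply])
  -- the values of `|x|², |y|², |1 - x|², |1 - y|², |1 - y / x|²` at the three points are
  -- `(1/2, 4, 1/2, 5, 5)`, `(1/2, 5, 1/2, 4, 5)` and `(5/8, 2, 1/8, 1, 1)`
  simp only [add_re, smul_re, log_re, norm_def, Real.log_sqrt (normSq_nonneg _)] at e₁ e₂ e₃
  norm_num [normSq_apply, div_re, div_im] at e₁ e₂ e₃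
  have log_four : Real.log 4 = 2 * Real.log 2 := by
    rw [show (4 : ℝ) = 2 ^ 2 by norm_num, Real.log_pow]; norm_num
  have log_eight : Real.log 8 = 3 * Real.log 2 := by
    rw [show (8 : ℝ) = 2 ^ 3 by norm_num, Real.log_pow]; norm_num
  rw [one_div, Real.log_inv, log_four] at e₁ e₂
  rw [Real.log_div (by norm_num) (by norm_num), one_div, Real.log_inv, log_eight] at e₃
  obtain ⟨h₁₂, h₁₅⟩ := eq_zero_of_mul_log_two_add_mul_log_five_eq_zero
    (a := -c₀ + 2 * c₁ - c₂) (b := c₃ + c₄) (by push_cast; linear_combination 2 * e₁)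
  obtain ⟨h₂₂, h₂₅⟩ := eq_zero_of_mul_log_two_add_mul_log_five_eq_zero
    (a := -c₀ - c₂ + 2 * c₃) (b := c₁ + c₄) (by push_cast; linear_combination 2 * e₂)
  obtain ⟨h₃₂, h₃₅⟩ := eq_zero_of_mul_log_two_add_mul_log_five_eq_zero
    (a := -3 * c₀ + c₁ - 3 * c₂) (b := c₀) (by push_cast; linear_combination 2 * e₃)
  omega

/-- The alternating wedge sum vanishes identically on `FT⁺` iff the
integers `pᵢ, qᵢ` satisfy exactly the relations of the lifted five term relation. -/
theorem wedge_five_term_iff (p₀ p₁ p₂ p₃ p₄ q₀ q₁ q₂ q₃ q₄ : ℤ) :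
    (∀ x : Fin 5 → ℂ, x ∈ FTPlus →
      wTerm (x 0) p₀ q₀ - wTerm (x 1) p₁ q₁ + wTerm (x 2) p₂ q₂
        - wTerm (x 3) p₃ q₃ + wTerm (x 4) p₄ q₄ = 0)
    ↔ (p₂ = p₁ - p₀ ∧ p₃ = p₁ - p₀ + q₁ - q₀ ∧ q₃ = q₂ - q₁ ∧
        p₄ = q₁ - q₀ ∧ q₄ = q₂ - q₁ - p₀) := by
  constructor
  · intro h
    have hc := eq_zero_of_forall_piWedge_eq_zero fun x y hx hy h₂ h₃ h₄ => by
      have hsum := h _ (mem_FTPlus hx hy h₂ h₃ h₄)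
      simp only [Matrix.cons_val] at hsum
      rwa [wTerm_alternating_sum_eq hx hy h₂ h₃ h₄] at hsum
    omega
  · rintro ⟨r₂, r₃, r₃', r₄, r₄'⟩ v ⟨⟨x, y, -, -, -, rfl⟩, him⟩
    simp only [Matrix.cons_val]
    rw [wTerm_alternating_sum_eq (x := x) (y := y) (him 0) (him 1) (him 2) (him 3) (him 4)]
    subst r₂ r₃ r₃' r₄ r₄'
    convert map_zero piWedge using 2
    module

end ExtendedBloch
end
end
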